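/- For every integer k that is either negative, or positive and odd, there exists n with s(n+1) - s(n) = k. -/
import Mathlib


def s : ℕ → ℤ
  | 0 => 0
  | n + 1 =>
    if (n + 1) % 2 = 0 then -s ((n + 1) / 2)
    else s (n / 2) + 1
decreasing_by all_goals omega

lemma s_two_mul (n : ℕ) : s (2 * n) = - s n := by
  cases n with
  | zero => simp [s]
  | succ m =>
    rw [show 2 * (m + 1) = (2 * m + 1) + 1 by ring, s]
    have h : (2 * m + 1 + 1) % 2 = 0 := by omega
    rw [if_pos h, show (2 * m + 1 + 1) / 2 = m + 1 by omega]

lemma s_two_mul_add_one (n : ℕ) : s (2 * n + 1) = s n + 1 := by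
  rw [show 2 * n + 1 = (2 * n) + 1 from rfl, s]
  have h : ¬ (2 * n + 1) % 2 = 0 := by omega
  rw [if_neg h]
  congr 2
  omega

lemma s_pow_sub_one (m : ℕ) : s (2 ^ m - 1) = m := by
  induction m with
  | zero => simp [s]
  | succ n ih =>
    have h : 2 ^ (n + 1) - 1 = 2 * (2 ^ n - 1) + 1 := by
      have := Nat.one_le_two_pow (n := n); ring_nf; omega
    rw [h, s_two_mul_add_one, ih]
    push_cast; ring

lemma s_surj (t : ℤ) : ∃ m : ℕ, s m = t := by
  rcases le_or_gt 0 t with h | h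
  · exact ⟨2 ^ t.toNat - 1, by rw [s_pow_sub_one]; omega⟩
  · refine ⟨2 * (2 ^ (-t).toNat - 1), ?_⟩
    rw [s_two_mul, s_pow_sub_one]; omega

theorem stmt10 (k : ℤ) (hk : k < 0 ∨ (0 < k ∧ Odd k)) :
    ∃ n : ℕ, s (n + 1) - s n = k := by
  rcases Int.even_or_odd k with he | ho
  · -- k even, so k < 0
    have hneg : k < 0 := by
      rcases hk with h | ⟨_, hodd⟩
      · exact h
      · exact absurd hodd (Int.not_odd_iff_even.mpr he)
    obtain ⟨c, hc⟩ := he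
    set j : ℕ := (-k - 2).toNat with hj
    have hjk : (j : ℤ) = -k - 2 := by omega
    have hjeven : j % 2 = 0 := by omega
    refine ⟨2 * (2 ^ j - 1) + 1, ?_⟩
    have h1 : 2 * (2 ^ j - 1) + 1 + 1 = 2 * 2 ^ j := by
      have := Nat.one_le_two_pow (n := j); omega
    rw [h1, s_two_mul, s_two_mul_add_one, s_pow_sub_one]
    have hsp : s (2 ^ j) = (-1 : ℤ) ^ j := by
      clear hjeven hjk hj
      induction j with
      | zero =>
        rw [show (2:ℕ)^0 = 2*0+1 from rfl, s_two_mul_add_one]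
        simp [s]
      | succ n ih =>
        rw [show (2:ℕ)^(n+1) = 2 * 2^n by ring, s_two_mul, ih]
        ring
    rw [hsp, (by omega : j = 2 * (j / 2)), pow_mul]
    norm_num
    omega
  · -- k odd
    obtain ⟨m, hm⟩ := s_surj ((k - 1) / 2)
    refine ⟨2 * m, ?_⟩
    rw [s_two_mul_add_one, s_two_mul, hm]
    obtain ⟨c, hc⟩ := ho
    omega
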